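/- arXiv:2008.12239 — 2 statements merged into one kernel-verified Lean document; each statement's English description precedes it below -/
import Mathlib

section
/- Let R be a commutative ring, m ≥ 2, and M an m×m matrix over R. Let A = adj(M) denote the adjugate of M, so that M·A = A·M = det(M)·I. Then for all row indices i < k and column indices j < l in {1, …, m}, the 2×2 minor of the adjugate satisfies A_{ij}·A_{kl} − A_{il}·A_{kj} = (−1)^{i+j+k+l} · det(M) · det(M(ĵ,l̂ | î,k̂)), where M(ĵ,l̂ | î,k̂) is the (m−2)×(m−2) matrix obtained from M by deleting rows j and l and columns i and k (keeping the remaining rows and columns in their natural order), and the determinant of the empty (0×0) matrix is 1. (This is the Jacobi theorem on minors of the adjugate matrix used in the proof of Lemma 4.1.) -/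
/-!
With `B` the identity matrix whose columns `i, k` are replaced by the columns `j, l` of `adj M`,
`M * B` is `M` with those columns replaced by `det M • e_j` and `det M • e_l`. Taking determinants,
`det M` times the adjugate minor equals `(det M)²` times the determinant of `M` with columns `i, k`
replaced by `e_j, e_l`, and two cofactor expansions turn the latter into the signed complementary
minor. The factor `det M` is cancelled on the generic matrix over `ℤ[X_pq]`, where it is not a
zero divisor, and the identity is then specialised to `M`.
-/

theorem Pi.single_comp_of_injective {α β R : Type*} [DecidableEq α] [DecidableEq β] [Zero R]
    {f : α → β} (hf : Function.Injective f) (a : α) (x : R) :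
    Pi.single (f a) x ∘ f = Pi.single a x :=
  Function.update_comp_eq_of_injective (0 : β → R) hf a x

theorem Fin.range_succAbove_comp_succAbove {n : ℕ} (p : Fin (n + 2)) (q : Fin (n + 1)) :
    Set.range (p.succAbove ∘ q.succAbove) = {x | x ≠ p.succAbove q ∧ x ≠ p} := by
  rw [Set.range_comp, Fin.range_succAbove,
    Set.image_compl_eq_range_sdiff_image Fin.succAbove_right_injective, Fin.range_succAbove,
    Set.image_singleton]
  ext x
  simp [and_comm]

theorem Fin.eq_succAbove_comp_succAbove_of_range_eq {n : ℕ} {i k : Fin (n + 2)} (hik : i < k)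
    {c : Fin n → Fin (n + 2)} (hc : StrictMono c)
    (hrange : Set.range c = {x | x ≠ i ∧ x ≠ k}) :
    c = k.succAbove ∘ (i.castPred (Fin.ne_last_of_lt hik)).succAbove :=
  (hc.range_inj ((Fin.strictMono_succAbove k).comp (Fin.strictMono_succAbove _))).mp <| by
    rw [hrange, range_succAbove_comp_succAbove, succAbove_castPred_of_lt _ _ hik]

namespace Matrix

theorem submatrix_updateCol_of_injective {m n m' n' α : Type*} [DecidableEq n] [DecidableEq n']
    (A : Matrix m n α) (f : m' → m) {g : n' → n} (hg : Function.Injective g) (j : n')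
    (v : m → α) :
    (A.updateCol (g j) v).submatrix f g = (A.submatrix f g).updateCol j (v ∘ f) := by
  ext x y
  exact Function.update_apply_of_injective _ hg _ _ _

variable {R : Type*} [CommRing R]

section

variable {n : Type*} [Fintype n] [DecidableEq n]

theorem det_one_updateCol_updateCol {i k : n} (hik : i ≠ k) (u w : n → R) :
    (((1 : Matrix n n R).updateCol i u).updateCol k w).det = u i * w k - u k * w i := by
  -- a rank-two update of `1`, so Weinstein–Aronszajn reduces the determinant to a `2 × 2` one
  let U : Matrix n (Fin 2) R := (of ![u - Pi.single i 1, w - Pi.single k 1])ᵀ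
  let V : Matrix (Fin 2) n R := of ![Pi.single i 1, Pi.single k 1]
  have hUV : ((1 : Matrix n n R).updateCol i u).updateCol k w = 1 + U * V := by
    ext x y
    rcases eq_or_ne y k with rfl | hyk
    · simp [U, V, mul_apply, one_apply, Pi.single_apply, hik.symm]
    rcases eq_or_ne y i with rfl | hyi
    · simp [U, V, mul_apply, one_apply, Pi.single_apply, hyk]
    · simp [U, V, mul_apply, one_apply, hyk, hyi]
  rw [hUV, det_one_add_mul_comm, det_fin_two]
  simp [U, V, hik, hik.symm]
  ring

theorem mul_updateCol_adjugate_col (M B : Matrix n n R) (i j : n) :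
    M * B.updateCol i (M.adjugate.col j) = (M * B).updateCol i (M.det • Pi.single j 1) := by
  rw [mul_updateCol, ← mulVec_single_one, mulVec_mulVec, mul_adjugate, smul_mulVec, one_mulVec]

theorem det_mul_adjugate_minor (M : Matrix n n R) {i k : n} (hik : i ≠ k) (j l : n) :
    M.det * (M.adjugate i j * M.adjugate k l - M.adjugate i l * M.adjugate k j) =
      M.det ^ 2 * ((M.updateCol i (Pi.single j 1)).updateCol k (Pi.single l 1)).det := by
  have hB := det_one_updateCol_updateCol (R := R) hik (M.adjugate.col j) (M.adjugate.col l)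
  simp only [col_apply] at hB
  rw [mul_comm (M.adjugate i l), ← hB, ← det_mul, mul_updateCol_adjugate_col,
    mul_updateCol_adjugate_col, mul_one, det_updateCol_smul, updateCol_comm _ hik,
    det_updateCol_smul, updateCol_comm _ hik.symm]
  ring

theorem adjugate_minor_eq (M : Matrix n n R) {i k : n} (hik : i ≠ k) (j l : n) :
    M.adjugate i j * M.adjugate k l - M.adjugate i l * M.adjugate k j =
      M.det * ((M.updateCol i (Pi.single j 1)).updateCol k (Pi.single l 1)).det := by
  let X := mvPolynomialX n n ℤ
  have hX : X.adjugate i j * X.adjugate k l - X.adjugate i l * X.adjugate k j =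
      X.det * ((X.updateCol i (Pi.single j 1)).updateCol k (Pi.single l 1)).det :=
    mul_left_cancel₀ (det_mvPolynomialX_ne_zero n ℤ) <| by
      rw [det_mul_adjugate_minor X hik, ← mul_assoc, ← sq]
  let φ := MvPolynomial.aeval (R := ℤ) fun p : n × n => M p.1 p.2
  have hφ : φ.mapMatrix X = M := mvPolynomialX_mapMatrix_aeval ℤ M
  have hsingle (a : n) : φ ∘ (Pi.single a 1 : n → MvPolynomial (n × n) ℤ) = Pi.single a 1 :=
    funext fun x => by simp [Pi.apply_single (fun _ => φ) (fun _ => map_zero φ)]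
  rw [← hφ, ← AlgHom.map_adjugate]
  simpa [AlgHom.map_det, AlgHom.mapMatrix_apply, map_updateCol, hsingle] using congrArg φ hX

end

theorem det_updateCol_single_one {n : ℕ} (M : Matrix (Fin (n + 1)) (Fin (n + 1)) R)
    (i j : Fin (n + 1)) :
    (M.updateCol i (Pi.single j 1)).det =
      (-1) ^ (i + j : ℕ) * (M.submatrix j.succAbove i.succAbove).det := by
  rw [← cramer_apply, cramer_eq_adjugate_mulVec, mulVec_single_one, col_apply,
    adjugate_fin_succ_eq_det_submatrix, add_comm]

theorem det_updateCol_single_one_updateCol_single_one {n : ℕ}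
    (M : Matrix (Fin (n + 2)) (Fin (n + 2)) R) {i k j l : Fin (n + 2)} (hik : i < k)
    (hjl : j < l) :
    ((M.updateCol i (Pi.single j 1)).updateCol k (Pi.single l 1)).det =
      (-1) ^ (i + j + k + l : ℕ) * (M.submatrix
        (l.succAbove ∘ (j.castPred (Fin.ne_last_of_lt hjl)).succAbove)
        (k.succAbove ∘ (i.castPred (Fin.ne_last_of_lt hik)).succAbove)).det := by
  set i' := i.castPred (Fin.ne_last_of_lt hik)
  set j' := j.castPred (Fin.ne_last_of_lt hjl)
  have hsub : (M.updateCol i (Pi.single j 1)).submatrix l.succAbove k.succAbove =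
      (M.submatrix l.succAbove k.succAbove).updateCol i' (Pi.single j' 1) := by
    rw [← Fin.succAbove_castPred_of_lt k i hik, ← Fin.succAbove_castPred_of_lt l j hjl,
      submatrix_updateCol_of_injective _ _ Fin.succAbove_right_injective,
      Pi.single_comp_of_injective Fin.succAbove_right_injective]
  rw [det_updateCol_single_one, hsub, det_updateCol_single_one, submatrix_submatrix,
    Fin.coe_castPred, Fin.coe_castPred]
  ring

end Matrix

/-- Jacobi's theorem on 2×2 minors of the adjugate matrix: for an `m × m`
matrix `M` (`m ≥ 2`) with adjugate `A = adj M`, rows `i < k` and columns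
`j < l`,
`A_{ij}·A_{kl} − A_{il}·A_{kj} = (−1)^{i+j+k+l} · det M · det M(ĵ,l̂ | î,k̂)`,
where `M(ĵ,l̂ | î,k̂)` is obtained from `M` by deleting rows `j, l` and columns
`i, k`, keeping the remaining rows and columns in their natural order (encoded
here by the strictly monotone enumerations `r` of `{x | x ≠ j ∧ x ≠ l}` and `c`
of `{x | x ≠ i ∧ x ≠ k}`). -/
theorem jacobi_adjugate_minor
    {R : Type*} [CommRing R] (m : ℕ) (hm : 2 ≤ m)
    (M : Matrix (Fin m) (Fin m) R)
    (i k j l : Fin m) (hik : i < k) (hjl : j < l)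
    (r c : Fin (m - 2) → Fin m)
    (hr : StrictMono r) (hc : StrictMono c)
    (hrange : Set.range r = {x : Fin m | x ≠ j ∧ x ≠ l})
    (hcrange : Set.range c = {x : Fin m | x ≠ i ∧ x ≠ k}) :
    M.adjugate i j * M.adjugate k l - M.adjugate i l * M.adjugate k j =
      (-1 : R) ^ ((i : ℕ) + (j : ℕ) + (k : ℕ) + (l : ℕ)) * M.det *
        (M.submatrix r c).det := by
  obtain ⟨n, rfl⟩ : ∃ n, m = n + 2 := ⟨m - 2, by omega⟩
  rw [Matrix.adjugate_minor_eq M hik.ne,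
    Matrix.det_updateCol_single_one_updateCol_single_one M hik hjl,
    ← Fin.eq_succAbove_comp_succAbove_of_range_eq hik hc hcrange,
    ← Fin.eq_succAbove_comp_succAbove_of_range_eq hjl hr hrange]
  ring
end

section
/- Let K be a commutative ring, m a positive integer, and R = K[x_{ab} : 1 ≤ a, b ≤ m] the polynomial ring in m² independent indeterminates. Let X = (x_{ab}) be the generic m×m matrix over R, let A = adj(X) be its adjugate and D = det(X). Then for all indices u, j, v, k in {1, …, m}, the formal partial derivative of the adjugate entry satisfies D · ∂A_{uj}/∂x_{vk} = A_{uj}·A_{kv} − A_{uv}·A_{kj}. (This is the derivative form of Jacobi's identity A_{uj}A_{kv} − A_{uv}A_{kj} = D(−1)^{u+j+k+v}A(uk|vj) underlying the proof of Lemma 4.1.) -/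
open MvPolynomial

/-- The generic `m × m` matrix over the polynomial ring
`K[x_{ab} : 1 ≤ a, b ≤ m]`. -/
noncomputable def genericMatrix (K : Type*) [CommRing K] (m : ℕ) :
    Matrix (Fin m) (Fin m) (MvPolynomial (Fin m × Fin m) K) :=
  Matrix.of fun a b => MvPolynomial.X (a, b)

/-! Differentiating `adj X * X = det X • 1` with a derivation `∂` of a commutative ring gives
`det X • ∂(adj X) = ∂(det X) • adj X - adj X * ∂X * adj X`. For the generic matrix and
`∂ = ∂/∂x_{vk}`, the matrix `∂X` is the matrix unit `E_{vk}`, and `∂(det X) = adj(X)_{kv}` by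
Laplace expansion along row `v`, because the cofactors of row `v` do not involve the variables
of that row. Reading off the `(u, j)` entry gives the identity. -/

namespace Derivation

section CommSemiring

variable {R S : Type*} [CommSemiring R] [CommSemiring S] [Algebra R S] (D : Derivation R S S)

theorem map_matrix_mul {l n p : Type*} [Fintype n] (M : Matrix l n S) (N : Matrix n p S) :
    (M * N).map D = M.map D * N + M * N.map D := by
  ext i j
  simp only [Matrix.map_apply, Matrix.mul_apply, Matrix.add_apply, map_sum, D.leibniz,
    smul_eq_mul, Finset.sum_add_distrib]
  rw [add_comm]
  congr 1
  exact Finset.sum_congr rfl fun _ _ => mul_comm _ _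

theorem map_matrix_smul_one {n : Type*} [DecidableEq n] (a : S) :
    (a • (1 : Matrix n n S)).map D = D a • 1 := by
  ext i j
  by_cases h : i = j <;> simp [h]

end CommSemiring

variable {R S : Type*} [CommSemiring R] [CommRing S] [Algebra R S] (D : Derivation R S S)

theorem det_smul_map_adjugate {n : Type*} [Fintype n] [DecidableEq n] (X : Matrix n n S) :
    X.det • X.adjugate.map D = D X.det • X.adjugate - X.adjugate * X.map D * X.adjugate := by
  have hmul : X.adjugate.map D * X = D X.det • 1 - X.adjugate * X.map D := by
    have h := congrArg (·.map D) (Matrix.adjugate_mul X)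
    simp only [D.map_matrix_mul, D.map_matrix_smul_one] at h
    exact eq_sub_of_add_eq h
  calc X.det • X.adjugate.map D = X.adjugate.map D * (X * X.adjugate) := by
        rw [Matrix.mul_adjugate, Matrix.mul_smul, Matrix.mul_one]
    _ = D X.det • X.adjugate - X.adjugate * X.map D * X.adjugate := by
        rw [← Matrix.mul_assoc, hmul, Matrix.sub_mul, Matrix.smul_mul, Matrix.one_mul]

end Derivation

theorem Matrix.mul_single_mul_apply {n α : Type*} [Fintype n] [DecidableEq n] [Semiring α]
    (A B : Matrix n n α) (c : α) (u v k j : n) :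
    (A * Matrix.single v k c * B) u j = A u v * c * B k j := by
  rw [Matrix.mul_apply, Finset.sum_eq_single k]
  · rw [Matrix.mul_single_apply_same]
  · intro b _ hb
    rw [Matrix.mul_single_apply_of_ne (hbj := hb), zero_mul]
  · simp

section genericMatrix

variable (K : Type*) [CommRing K] {m : ℕ}

theorem genericMatrix_map_pderiv (v k : Fin m) :
    (genericMatrix K m).map (pderiv (v, k)) = Matrix.single v k 1 := by
  ext a b
  simp [genericMatrix, pderiv_X, Matrix.single_apply, Pi.single_apply, Prod.ext_iff, eq_comm]

theorem adjugate_genericMatrix_mem_supported (c v : Fin m) :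
    (genericMatrix K m).adjugate c v ∈ supported K {p | p.1 ≠ v} := by
  rw [Matrix.adjugate_apply, Matrix.det_apply]
  refine Subalgebra.sum_mem _ fun σ _ => ?_
  rw [Units.smul_def]
  refine Subalgebra.zsmul_mem _ (Subalgebra.prod_mem _ fun i _ => ?_) _
  rcases eq_or_ne (σ i) v with h | h
  · rw [h, Matrix.updateRow_self, Pi.single_apply]
    split_ifs
    exacts [Subalgebra.one_mem _, Subalgebra.zero_mem _]
  · rw [Matrix.updateRow_ne h]
    exact Algebra.subset_adjoin ⟨(σ i, i), h, rfl⟩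

theorem pderiv_det_genericMatrix (v k : Fin m) :
    pderiv (v, k) (genericMatrix K m).det = (genericMatrix K m).adjugate k v := by
  have hadj (c : Fin m) : pderiv (v, k) ((genericMatrix K m).adjugate c v) = 0 := by
    refine derivation_eqOn_supported (D₂ := 0) (fun p hp => ?_)
      (adjugate_genericMatrix_mem_supported K c v)
    exact pderiv_X_of_ne fun h => hp (congrArg Prod.fst h)
  rw [Matrix.det_eq_sum_mul_adjugate_row _ v, map_sum]
  simp_rw [pderiv_mul, hadj, mul_zero, add_zero]
  simp [genericMatrix, pderiv_X, Pi.single_apply]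

end genericMatrix

theorem det_mul_pderiv_adjugate_general
    (K : Type*) [CommRing K] (m : ℕ) (u j v k : Fin m) :
    (genericMatrix K m).det *
        MvPolynomial.pderiv (v, k) ((genericMatrix K m).adjugate u j) =
      (genericMatrix K m).adjugate u j * (genericMatrix K m).adjugate k v -
        (genericMatrix K m).adjugate u v * (genericMatrix K m).adjugate k j := by
  have h := congrFun₂ ((pderiv (v, k)).det_smul_map_adjugate (genericMatrix K m)) u j
  rw [pderiv_det_genericMatrix, genericMatrix_map_pderiv, Matrix.sub_apply,
    Matrix.mul_single_mul_apply] at h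
  simp only [Matrix.smul_apply, Matrix.map_apply, smul_eq_mul, mul_one] at h
  rw [h, mul_comm]

/-- The derivative form of Jacobi's identity: for the generic matrix `X` with
adjugate `A = adj X` and determinant `D = det X`, the formal partial
derivative satisfies `D · ∂A_{uj}/∂x_{vk} = A_{uj}·A_{kv} − A_{uv}·A_{kj}`. -/
theorem det_mul_pderiv_adjugate
    (K : Type*) [CommRing K] (m : ℕ) (hm : 0 < m) (u j v k : Fin m) :
    (genericMatrix K m).det *
        MvPolynomial.pderiv (v, k) ((genericMatrix K m).adjugate u j) =
      (genericMatrix K m).adjugate u j * (genericMatrix K m).adjugate k v -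
        (genericMatrix K m).adjugate u v * (genericMatrix K m).adjugate k j :=
  det_mul_pderiv_adjugate_general K m u j v k
end
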